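/- arXiv:2312.00730 — 3 statements merged into one kernel-verified Lean document; each statement's English description precedes it below -/
import Mathlib

section
/- Under the Crank-Nicolson update in a constant field B with v^n ⊥ B, the magnitude of the half-step velocity is ‖v^{n+1/2}‖ = ‖v^n‖ / √(1 + Ω²Δt²/4), where Ω = ‖B‖. -/
open Real Filter

noncomputable def cross (a b : EuclideanSpace ℝ (Fin 3)) : EuclideanSpace ℝ (Fin 3) :=
  WithLp.toLp 2 ![a 1 * b 2 - a 2 * b 1, a 2 * b 0 - a 0 * b 2, a 0 * b 1 - a 1 * b 0]

/-!
Eliminating `v1` shows that the half-step velocity solves `v0 = vh - (Δt / 2) • vh × B`.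
Since `(vh × B) ⬝ B = 0`, the constraint `v0 ⬝ B = 0` passes to `vh`, and then `vh × B` is
orthogonal to `vh` with norm `‖vh‖ ‖B‖`; Pythagoras gives `‖v0‖² = ‖vh‖² (1 + ‖B‖² Δt² / 4)`.
-/

open Matrix

lemma cross_eq_crossProduct (a b : EuclideanSpace ℝ (Fin 3)) :
    cross a b = WithLp.toLp 2 (a.ofLp ⨯₃ b.ofLp) :=
  rfl

lemma real_inner_eq_dotProduct (x y : EuclideanSpace ℝ (Fin 3)) :
    inner ℝ x y = x.ofLp ⬝ᵥ y.ofLp := by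
  rw [EuclideanSpace.inner_eq_star_dotProduct, star_trivial, dotProduct_comm]

lemma inner_self_cross (a b : EuclideanSpace ℝ (Fin 3)) : inner ℝ a (cross a b) = 0 := by
  rw [real_inner_eq_dotProduct, cross_eq_crossProduct]
  exact dot_self_cross _ _

lemma inner_cross_self (a b : EuclideanSpace ℝ (Fin 3)) : inner ℝ (cross a b) b = 0 := by
  rw [real_inner_comm, real_inner_eq_dotProduct, cross_eq_crossProduct]
  exact dot_cross_self _ _

lemma norm_cross_sq (a b : EuclideanSpace ℝ (Fin 3)) :
    ‖cross a b‖ ^ 2 = ‖a‖ ^ 2 * ‖b‖ ^ 2 - inner ℝ a b ^ 2 := by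
  simp only [← real_inner_self_eq_norm_sq, real_inner_eq_dotProduct, cross_eq_crossProduct,
    cross_dot_cross, dotProduct_comm b.ofLp a.ofLp]
  ring

lemma norm_sub_smul_cross_sq {x b : EuclideanSpace ℝ (Fin 3)} (hxb : inner ℝ x b = 0) (c : ℝ) :
    ‖x - c • cross x b‖ ^ 2 = ‖x‖ ^ 2 * (1 + ‖b‖ ^ 2 * c ^ 2) := by
  have horth : inner ℝ x (c • cross x b) = 0 := by
    rw [real_inner_smul_right, inner_self_cross, mul_zero]
  have hcross := norm_cross_sq x b
  rw [hxb] at hcross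
  rw [sq, norm_sub_sq_eq_norm_sq_add_norm_sq_real horth, norm_smul, Real.norm_eq_abs]
  linear_combination c ^ 2 * hcross + ‖cross x b‖ ^ 2 * abs_mul_abs_self c

lemma crankNicolson_eq_sub_smul_cross {B v0 v1 vh : EuclideanSpace ℝ (Fin 3)} {Δt : ℝ}
    (hupd : v1 = v0 + Δt • cross vh B) (hhalf : vh = (1 / 2 : ℝ) • (v0 + v1)) :
    v0 = vh - (Δt / 2) • cross vh B := by
  set w := cross vh B -- so that `rw [hhalf]` leaves the `vh` inside `cross vh B` alone
  rw [hupd] at hhalf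
  rw [hhalf]
  module

theorem stmt_2_general (B v0 v1 vh : EuclideanSpace ℝ (Fin 3))
    (Δt : ℝ)
    (hupd : v1 = v0 + Δt • cross vh B)
    (hhalf : vh = (1 / 2 : ℝ) • (v0 + v1))
    (hperp : (inner ℝ v0 B : ℝ) = 0) :
    ‖vh‖ = ‖v0‖ / Real.sqrt (1 + ‖B‖ ^ 2 * Δt ^ 2 / 4) := by
  have hv0 := crankNicolson_eq_sub_smul_cross hupd hhalf
  have hvhB : inner ℝ vh B = 0 := by
    rwa [hv0, inner_sub_left, real_inner_smul_left, inner_cross_self, mul_zero, sub_zero] at hperp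
  have hnorm : ‖v0‖ = ‖vh‖ * √(1 + ‖B‖ ^ 2 * Δt ^ 2 / 4) := by
    rw [← sqrt_sq (norm_nonneg v0), hv0, norm_sub_smul_cross_sq hvhB, sqrt_mul (sq_nonneg _),
      sqrt_sq (norm_nonneg _)]
    congr 2; ring
  have hpos : 0 < √(1 + ‖B‖ ^ 2 * Δt ^ 2 / 4) := sqrt_pos.2 (by positivity)
  rw [hnorm, mul_div_cancel_right₀ _ hpos.ne']

/-- Magnitude of the half-step velocity of the Crank-Nicolson update. -/
theorem stmt_2 (B v0 v1 vh : EuclideanSpace ℝ (Fin 3)) (hB : B ≠ 0)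
    (Δt : ℝ) (hΔt : 0 < Δt)
    (hupd : v1 = v0 + Δt • cross vh B)
    (hhalf : vh = (1 / 2 : ℝ) • (v0 + v1))
    (hperp : (inner ℝ v0 B : ℝ) = 0) :
    ‖vh‖ = ‖v0‖ / Real.sqrt (1 + ‖B‖ ^ 2 * Δt ^ 2 / 4) :=
  stmt_2_general B v0 v1 vh Δt hupd hhalf hperp
end

section
/- Consider the update x^{n+1} = x^n + Δt_n u^{n+1/2}, u^{n+1} = u^n + Δt_n u^{n+1/2} × B with u^{n+1/2} = (u^n + u^{n+1})/2, constant B ∈ ℝ³, u⁰ · B = 0, and an arbitrary sequence of positive time-steps Δt_n. Then all positions x^n lie on a single circle of radius ρ = ‖u⁰‖/‖B‖ in the plane through x⁰ perpendicular to B, provided the first three positions are not collinear. -/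
open Real Filter

/-!
The Crank–Nicolson velocity update is the Cayley transform of the skew map `v ↦ v × B`, so for
every step size it preserves `‖u‖` and `u · B` exactly. It also conserves the guiding center
`x + (u × B) / ‖B‖²` exactly: its increment is `Δt (uh + (uh × B) × B / ‖B‖²)`, which vanishes
because `uh ⊥ B`. Hence, with `c` the initial guiding center, `xⁿ - c = -(uⁿ × B) / ‖B‖²` is
orthogonal to `B` and has length `‖uⁿ‖ / ‖B‖ = ‖u⁰‖ / ‖B‖`.
-/

open WithLp Matrix InnerProductGeometry
open scoped RealInnerProductSpace

section Cross

variable (a b c : EuclideanSpace ℝ (Fin 3))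

theorem cross_eq_toLp_crossProduct : cross a b = toLp 2 (ofLp a ⨯₃ ofLp b) := rfl

theorem EuclideanSpace.real_inner_eq_dotProduct : ⟪a, b⟫ = ofLp a ⬝ᵥ ofLp b := by
  rw [EuclideanSpace.inner_eq_star_dotProduct, star_trivial, dotProduct_comm]

theorem cross_sub_left : cross (a - b) c = cross a c - cross b c := by
  simp only [cross_eq_toLp_crossProduct, ofLp_sub, map_sub, LinearMap.sub_apply, toLp_sub]

theorem cross_smul_left (r : ℝ) : cross (r • a) b = r • cross a b := by
  simp only [cross_eq_toLp_crossProduct, ofLp_smul, map_smul, LinearMap.smul_apply, toLp_smul]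

theorem inner_cross_left_self : ⟪cross a b, a⟫ = 0 := by
  rw [real_inner_comm, EuclideanSpace.real_inner_eq_dotProduct, cross_eq_toLp_crossProduct,
    ofLp_toLp, dot_self_cross]

theorem inner_cross_right_self : ⟪cross a b, b⟫ = 0 := by
  rw [real_inner_comm, EuclideanSpace.real_inner_eq_dotProduct, cross_eq_toLp_crossProduct,
    ofLp_toLp, dot_cross_self]

theorem cross_cross_right_self : cross (cross a b) b = ⟪a, b⟫ • b - ‖b‖ ^ 2 • a := by
  rw [← real_inner_self_eq_norm_sq, EuclideanSpace.real_inner_eq_dotProduct,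
    EuclideanSpace.real_inner_eq_dotProduct, cross_eq_toLp_crossProduct,
    cross_eq_toLp_crossProduct, ofLp_toLp, cross_cross_eq_smul_sub_smul, toLp_sub, toLp_smul,
    toLp_smul, toLp_ofLp, toLp_ofLp]

theorem norm_cross_of_inner_eq_zero (h : ⟪a, b⟫ = 0) : ‖cross a b‖ = ‖a‖ * ‖b‖ := by
  rw [cross_eq_toLp_crossProduct, norm_ofLp_crossProduct,
    (inner_eq_zero_iff_angle_eq_pi_div_two a b).1 h, sin_pi_div_two, mul_one]

end Cross

noncomputable def guidingCenter (B x u : EuclideanSpace ℝ (Fin 3)) : EuclideanSpace ℝ (Fin 3) :=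
  x + (‖B‖ ^ 2)⁻¹ • cross u B

theorem sub_guidingCenter (B x u : EuclideanSpace ℝ (Fin 3)) :
    x - guidingCenter B x u = -((‖B‖ ^ 2)⁻¹ • cross u B) := by
  rw [guidingCenter, sub_add_cancel_left]

theorem inner_sub_guidingCenter (B x u : EuclideanSpace ℝ (Fin 3)) :
    ⟪x - guidingCenter B x u, B⟫ = 0 := by
  rw [sub_guidingCenter, inner_neg_left, real_inner_smul_left, inner_cross_right_self, mul_zero,
    neg_zero]

theorem norm_sub_guidingCenter {B u : EuclideanSpace ℝ (Fin 3)} (x : EuclideanSpace ℝ (Fin 3))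
    (h : ⟪u, B⟫ = 0) : ‖x - guidingCenter B x u‖ = ‖u‖ / ‖B‖ := by
  rw [sub_guidingCenter, norm_neg, norm_smul, norm_cross_of_inner_eq_zero u B h, norm_inv,
    norm_pow, norm_norm]
  rcases eq_or_ne ‖B‖ 0 with hB | hB
  · simp [hB]
  · field_simp

namespace CrankNicolson

variable {B : EuclideanSpace ℝ (Fin 3)} {x u uh : ℕ → EuclideanSpace ℝ (Fin 3)} {Δt : ℕ → ℝ}

theorem inner_velocity_eq_zero (hu : ∀ n, u (n + 1) = u n + Δt n • cross (uh n) B)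
    (hperp : ⟪u 0, B⟫ = 0) (n : ℕ) : ⟪u n, B⟫ = 0 := by
  induction n with
  | zero => exact hperp
  | succ n ih => rw [hu n, inner_add_left, real_inner_smul_left, inner_cross_right_self, ih,
      mul_zero, add_zero]

theorem inner_midpoint_eq_zero (hu : ∀ n, u (n + 1) = u n + Δt n • cross (uh n) B)
    (hhalf : ∀ n, uh n = (1 / 2 : ℝ) • (u n + u (n + 1))) (hperp : ⟪u 0, B⟫ = 0) (n : ℕ) :
    ⟪uh n, B⟫ = 0 := by
  rw [hhalf n, real_inner_smul_left, inner_add_left, inner_velocity_eq_zero hu hperp n,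
    inner_velocity_eq_zero hu hperp (n + 1), add_zero, mul_zero]

theorem norm_velocity_eq (hu : ∀ n, u (n + 1) = u n + Δt n • cross (uh n) B)
    (hhalf : ∀ n, uh n = (1 / 2 : ℝ) • (u n + u (n + 1))) (n : ℕ) : ‖u n‖ = ‖u 0‖ := by
  induction n with
  | zero => rfl
  | succ n ih =>
    have hsum : u (n + 1) + u n = (2 : ℝ) • uh n := by rw [hhalf n]; module
    have hdiff : u (n + 1) - u n = Δt n • cross (uh n) B := by rw [hu n]; abel
    rw [← ih, ← real_inner_add_sub_eq_zero_iff, hsum, hdiff, real_inner_smul_left,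
      real_inner_smul_right, real_inner_comm, inner_cross_left_self, mul_zero, mul_zero]

theorem cross_velocity_succ (hu : ∀ n, u (n + 1) = u n + Δt n • cross (uh n) B)
    (hhalf : ∀ n, uh n = (1 / 2 : ℝ) • (u n + u (n + 1))) (hperp : ⟪u 0, B⟫ = 0) (n : ℕ) :
    cross (u (n + 1)) B = cross (u n) B - (‖B‖ ^ 2 * Δt n) • uh n := by
  have hdiff : u (n + 1) - u n = Δt n • cross (uh n) B := by rw [hu n]; abel
  calc cross (u (n + 1)) B = cross (u n) B + cross (u (n + 1) - u n) B := by
        rw [cross_sub_left]; abel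
    _ = cross (u n) B - (‖B‖ ^ 2 * Δt n) • uh n := by
        rw [hdiff, cross_smul_left, cross_cross_right_self, inner_midpoint_eq_zero hu hhalf hperp n]
        module

theorem guidingCenter_eq (hB : B ≠ 0) (hx : ∀ n, x (n + 1) = x n + Δt n • uh n)
    (hu : ∀ n, u (n + 1) = u n + Δt n • cross (uh n) B)
    (hhalf : ∀ n, uh n = (1 / 2 : ℝ) • (u n + u (n + 1))) (hperp : ⟪u 0, B⟫ = 0) (n : ℕ) :
    guidingCenter B (x n) (u n) = guidingCenter B (x 0) (u 0) := by
  induction n with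
  | zero => rfl
  | succ n ih =>
    have hB2 : ‖B‖ ^ 2 ≠ 0 := by positivity
    rw [← ih, guidingCenter, guidingCenter, hx n, cross_velocity_succ hu hhalf hperp n, smul_sub,
      smul_smul, inv_mul_cancel_left₀ hB2]
    abel

end CrankNicolson

open CrankNicolson in
theorem stmt_7_general (B : EuclideanSpace ℝ (Fin 3)) (hB : B ≠ 0)
    (x u uh : ℕ → EuclideanSpace ℝ (Fin 3)) (Δt : ℕ → ℝ)
    (hx : ∀ n, x (n + 1) = x n + Δt n • uh n)
    (hu : ∀ n, u (n + 1) = u n + Δt n • cross (uh n) B)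
    (hhalf : ∀ n, uh n = (1 / 2 : ℝ) • (u n + u (n + 1)))
    (hperp : (inner ℝ (u 0) B : ℝ) = 0) :
    ∃ c : EuclideanSpace ℝ (Fin 3),
      (inner ℝ (c - x 0) B : ℝ) = 0 ∧
      ∀ n, ‖x n - c‖ = ‖u 0‖ / ‖B‖ ∧ (inner ℝ (x n - x 0) B : ℝ) = 0 := by
  set c := guidingCenter B (x 0) (u 0)
  have hc (n : ℕ) : guidingCenter B (x n) (u n) = c := guidingCenter_eq hB hx hu hhalf hperp n
  have hplane (n : ℕ) : ⟪x n - c, B⟫ = 0 := hc n ▸ inner_sub_guidingCenter B (x n) (u n)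
  refine ⟨c, ?_, fun n => ⟨?_, ?_⟩⟩
  · rw [← neg_sub, inner_neg_left, hplane 0, neg_zero]
  · rw [← hc n, norm_sub_guidingCenter _ (inner_velocity_eq_zero hu hperp n),
      norm_velocity_eq hu hhalf n]
  · rw [← sub_sub_sub_cancel_right (x n) (x 0) c, inner_sub_left, hplane n, hplane 0, sub_zero]

/-- Lemma 1: with constant B, u⁰ ⊥ B, and an arbitrary sequence of positive
time-steps, all the Crank-Nicolson positions x^n lie on a single circle of
radius ρ = ‖u⁰‖/‖B‖ in the plane through x⁰ perpendicular to B
(provided the first three positions are not collinear). -/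
theorem stmt_7 (B : EuclideanSpace ℝ (Fin 3)) (hB : B ≠ 0)
    (x u uh : ℕ → EuclideanSpace ℝ (Fin 3)) (Δt : ℕ → ℝ)
    (hΔt : ∀ n, 0 < Δt n)
    (hx : ∀ n, x (n + 1) = x n + Δt n • uh n)
    (hu : ∀ n, u (n + 1) = u n + Δt n • cross (uh n) B)
    (hhalf : ∀ n, uh n = (1 / 2 : ℝ) • (u n + u (n + 1)))
    (hperp : (inner ℝ (u 0) B : ℝ) = 0)
    (hu0 : u 0 ≠ 0)
    (hnc : ¬ Collinear ℝ ({x 0, x 1, x 2} : Set (EuclideanSpace ℝ (Fin 3)))) :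
    ∃ c : EuclideanSpace ℝ (Fin 3),
      (inner ℝ (c - x 0) B : ℝ) = 0 ∧
      ∀ n, ‖x n - c‖ = ‖u 0‖ / ‖B‖ ∧ (inner ℝ (x n - x 0) B : ℝ) = 0 :=
  stmt_7_general B hB x u uh Δt hx hu hhalf hperp
end

section
/- Let u^{1/2} = (u⁰ + (Δt/2) u⁰ × B)/(1 + Ω²Δt²/4) with u⁰ ⊥ B, Ω = ‖B‖. Then u^{1/2} → (2/(ΩΔt)) times a vector of bounded norm as Δt → ∞; precisely, Δt · u^{1/2} → 2 (u⁰ × B)/Ω² = 2ρ (û⁰ × b) as Δt → ∞, where ρ = ‖u⁰‖/Ω. -/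
open Real Filter

/-! With `s = (1 + a²t²/4)⁻¹` one has `1 - s = a²t²s/4`, so for `t ≠ 0` the rescaled half step
`t • s • (u + (t/2) • w)` equals `(1 - s) • ((4/a²) • t⁻¹ • u + (2/a²) • w)`; as `s → 0` and
`t⁻¹ → 0`, only the `w`-component survives. -/

lemma cross_smul_smul (a b : ℝ) (u v : EuclideanSpace ℝ (Fin 3)) :
    cross (a • u) (b • v) = (a * b) • cross u v := by
  ext i
  fin_cases i <;> simp [cross] <;> ring

lemma tendsto_inv_one_add_sq_mul_sq_div_four_atTop {a : ℝ} (ha : a ≠ 0) :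
    Tendsto (fun t : ℝ => (1 + a ^ 2 * t ^ 2 / 4)⁻¹) atTop (nhds 0) := by
  refine tendsto_inv_atTop_zero.comp (tendsto_atTop_add_const_left _ 1 ?_)
  have hsq : Tendsto (fun t : ℝ => t ^ 2) atTop atTop := tendsto_pow_atTop two_ne_zero
  simpa only [mul_div_right_comm] using hsq.const_mul_atTop (by positivity : 0 < a ^ 2 / 4)

section HalfStep

variable {E : Type*} [AddCommGroup E] [Module ℝ E]

lemma smul_inv_one_add_sq_mul_sq_div_four_smul {a t : ℝ} (ha : a ≠ 0) (ht : t ≠ 0) (u w : E) :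
    t • ((1 + a ^ 2 * t ^ 2 / 4)⁻¹ • (u + (t / 2) • w)) =
      (1 - (1 + a ^ 2 * t ^ 2 / 4)⁻¹) • ((4 / a ^ 2) • t⁻¹ • u + (2 / a ^ 2) • w) := by
  have hd : 1 + a ^ 2 * t ^ 2 / 4 ≠ 0 := by positivity
  match_scalars <;> field_simp <;> ring

variable [TopologicalSpace E] [ContinuousAdd E] [ContinuousSMul ℝ E]

lemma tendsto_smul_inv_one_add_sq_mul_sq_div_four_smul {a : ℝ} (ha : a ≠ 0) (u w : E) :
    Tendsto (fun t : ℝ => t • ((1 + a ^ 2 * t ^ 2 / 4)⁻¹ • (u + (t / 2) • w))) atTop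
      (nhds ((2 / a ^ 2) • w)) := by
  have hlim : Tendsto
      (fun t : ℝ => (1 - (1 + a ^ 2 * t ^ 2 / 4)⁻¹) • ((4 / a ^ 2) • t⁻¹ • u + (2 / a ^ 2) • w))
      atTop (nhds ((1 - 0 : ℝ) • ((4 / a ^ 2) • (0 : ℝ) • u + (2 / a ^ 2) • w))) :=
    (tendsto_const_nhds.sub (tendsto_inv_one_add_sq_mul_sq_div_four_atTop ha)).smul
      (((tendsto_inv_atTop_zero.smul_const u).const_smul _).add tendsto_const_nhds)
  rw [sub_zero, one_smul, zero_smul, smul_zero, zero_add] at hlim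
  refine hlim.congr' ?_
  filter_upwards [eventually_ne_atTop 0] with t ht
  exact (smul_inv_one_add_sq_mul_sq_div_four_smul ha ht u w).symm

end HalfStep

theorem stmt_9_general (B u0 : EuclideanSpace ℝ (Fin 3)) (hB : B ≠ 0) (hu0 : u0 ≠ 0) :
    Tendsto
      (fun Δt : ℝ => Δt •
        ((1 + ‖B‖ ^ 2 * Δt ^ 2 / 4)⁻¹ • (u0 + (Δt / 2) • cross u0 B)))
      atTop (nhds ((2 / ‖B‖ ^ 2) • cross u0 B)) ∧
    (2 / ‖B‖ ^ 2) • cross u0 B =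
      (2 * (‖u0‖ / ‖B‖)) • cross (‖u0‖⁻¹ • u0) (‖B‖⁻¹ • B) := by
  have hB' : ‖B‖ ≠ 0 := norm_ne_zero_iff.mpr hB
  have hu0' : ‖u0‖ ≠ 0 := norm_ne_zero_iff.mpr hu0
  refine ⟨tendsto_smul_inv_one_add_sq_mul_sq_div_four_smul hB' u0 (cross u0 B), ?_⟩
  rw [cross_smul_smul, smul_smul]
  congr 1
  field_simp

/-- Δt · u^{1/2} → 2 (u⁰ × B)/Ω² = 2ρ (û⁰ × b) as Δt → ∞. -/
theorem stmt_9 (B u0 : EuclideanSpace ℝ (Fin 3)) (hB : B ≠ 0) (hu0 : u0 ≠ 0)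
    (hperp : (inner ℝ u0 B : ℝ) = 0) :
    Tendsto
      (fun Δt : ℝ => Δt •
        ((1 + ‖B‖ ^ 2 * Δt ^ 2 / 4)⁻¹ • (u0 + (Δt / 2) • cross u0 B)))
      atTop (nhds ((2 / ‖B‖ ^ 2) • cross u0 B)) ∧
    (2 / ‖B‖ ^ 2) • cross u0 B =
      (2 * (‖u0‖ / ‖B‖)) • cross (‖u0‖⁻¹ • u0) (‖B‖⁻¹ • B) :=
  stmt_9_general B u0 hB hu0
end
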